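/- (Chen–Sagan periodicity mod 2) For every m ≥ 0 and all natural numbers n, k with 0 ≤ n, k < 3·2^m, the fibonomial coefficients satisfy C(n + 3·2^m, k)_F ≡ C(n, k)_F (mod 2). -/
import Mathlib

/-- The fibotorial `n!_F = F_n · F_{n-1} ⋯ F_1`, with `0!_F = 1`. -/
def fibotorial (n : ℕ) : ℕ := ∏ i ∈ Finset.range n, Nat.fib (i + 1)

/-- The fibonomial coefficient `C(n,k)_F = n!_F / (k!_F · (n-k)!_F)` for `k ≤ n`,
and `0` otherwise. -/
def fibnomial (n k : ℕ) : ℕ :=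
  if k ≤ n then fibotorial n / (fibotorial k * fibotorial (n - k)) else 0

/-- Recursive version of the fibonomial coefficient. -/
def fibnom : ℕ → ℕ → ℕ
  | _, 0 => 1
  | 0, _+1 => 0
  | n+1, k+1 => Nat.fib (n - k + 1) * fibnom n k + Nat.fib k * fibnom n (k+1)

lemma fibotorial_zero : fibotorial 0 = 1 := rfl

lemma fibotorial_succ (n : ℕ) : fibotorial (n+1) = Nat.fib (n+1) * fibotorial n := by
  rw [fibotorial, Finset.prod_range_succ, mul_comm]; rfl

lemma fibotorial_pos (n : ℕ) : 0 < fibotorial n := by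
  apply Finset.prod_pos
  intro i _
  exact Nat.fib_pos.mpr (Nat.succ_pos i)

lemma fibnom_eq_zero {n k : ℕ} (h : n < k) : fibnom n k = 0 := by
  induction n generalizing k with
  | zero =>
    match k, h with
    | k+1, _ => rfl
  | succ n ih =>
    match k, h with
    | k+1, h =>
      rw [fibnom, ih (by omega), ih (by omega)]
      simp

lemma fibnom_mul {n k : ℕ} (h : k ≤ n) :
    fibnom n k * (fibotorial k * fibotorial (n - k)) = fibotorial n := by
  induction n generalizing k with
  | zero =>
    interval_cases k
    simp [fibnom, fibotorial_zero]
  | succ n ih =>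
    match k with
    | 0 => simp [fibnom, fibotorial_zero]
    | k+1 =>
      obtain ⟨j, rfl⟩ : ∃ j, n = k + j := ⟨n - k, by omega⟩
      have hsub : k + j + 1 - (k + 1) = j := by omega
      have hsub2 : k + j - k = j := by omega
      rw [hsub, fibnom, hsub2]
      match j with
      | 0 =>
        have ih1 := ih (show k ≤ k + 0 from by omega)
        simp only [Nat.add_zero, Nat.sub_self, fibotorial_zero, mul_one] at ih1
        simp only [Nat.add_zero]
        rw [fibnom_eq_zero (show k < k + 1 from by omega)]
        have step : (Nat.fib (0+1) * fibnom k k + Nat.fib k * 0) *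
            (fibotorial (k+1) * fibotorial 0)
            = Nat.fib (k+1) * (fibnom k k * fibotorial k) := by
          rw [fibotorial_succ k, fibotorial_zero]
          simp only [Nat.zero_add, Nat.fib_one, mul_zero, add_zero, one_mul, mul_one]
          ring
        rw [step, ih1, show k+0+1 = k+1 from rfl, fibotorial_succ]
      | j+1 =>
        have ih1 := ih (show k ≤ k + (j+1) from by omega)
        have ih2 := ih (show k + 1 ≤ k + (j+1) from by omega)
        have e1 : k + (j+1) - k = j + 1 := by omega
        have e2 : k + (j+1) - (k+1) = j := by omega
        rw [e1] at ih1
        rw [e2] at ih2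
        have key : Nat.fib (k + (j+1) + 1) = Nat.fib k * Nat.fib (j+1) + Nat.fib (k+1) * Nat.fib (j+1+1) := by
          have := Nat.fib_add k (j+1)
          convert this using 2 <;> omega
        calc (Nat.fib (j + 1 + 1) * fibnom (k+(j+1)) k + Nat.fib k * fibnom (k+(j+1)) (k+1)) *
              (fibotorial (k+1) * fibotorial (j+1))
            = Nat.fib (k+1) * Nat.fib (j+1+1) *
                (fibnom (k+(j+1)) k * (fibotorial k * fibotorial (j+1)))
              + Nat.fib k * Nat.fib (j+1) *
                (fibnom (k+(j+1)) (k+1) * (fibotorial (k+1) * fibotorial j)) := by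
              rw [fibotorial_succ k, fibotorial_succ j]; ring
          _ = Nat.fib (k+1) * Nat.fib (j+1+1) * fibotorial (k+(j+1))
              + Nat.fib k * Nat.fib (j+1) * fibotorial (k+(j+1)) := by rw [ih1, ih2]
          _ = Nat.fib (k+(j+1)+1) * fibotorial (k+(j+1)) := by rw [key]; ring
          _ = fibotorial (k+(j+1)+1) := (fibotorial_succ _).symm

lemma fibnomial_eq_fibnom (n k : ℕ) : fibnomial n k = fibnom n k := by
  rw [fibnomial]
  by_cases h : k ≤ n
  · rw [if_pos h]
    exact Nat.div_eq_of_eq_mul_left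
      (Nat.mul_pos (fibotorial_pos k) (fibotorial_pos (n-k))) (fibnom_mul h).symm
  · rw [if_neg h, fibnom_eq_zero (by omega)]

lemma fib_mod_two : ∀ j : ℕ, Nat.fib j % 2 = if j % 3 = 0 then 0 else 1
  | 0 => rfl
  | 1 => rfl
  | 2 => rfl
  | (j+3) => by
    have h : Nat.fib (j+3) = 2 * Nat.fib (j+1) + Nat.fib j := by
      rw [show j+3 = (j+1)+2 from rfl, Nat.fib_add_two,
          show j+2 = j+2 from rfl, Nat.fib_add_two]
      ring
    have ih := fib_mod_two j
    have h3 : (j+3) % 3 = j % 3 := by omega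
    rw [h, h3]
    omega

lemma fib_cast_two (j : ℕ) : (Nat.fib j : ZMod 2) = if j % 3 = 0 then 0 else 1 := by
  have : ((Nat.fib j % 2 : ℕ) : ZMod 2) = (Nat.fib j : ZMod 2) := ZMod.natCast_mod _ _
  rw [← this, fib_mod_two]
  split <;> simp

/-- The base 6×6 parity table of the fibonomial triangle. -/
def Bt : ℕ → ℕ → ZMod 2
  | 3, 1 => 0
  | 3, 2 => 0
  | 4, 2 => 0
  | b, d => if d ≤ b then 1 else 0

lemma Bt_zero {b d : ℕ} (hb : b < 6) (hd : d < 6) (h : b < d) : Bt b d = 0 := by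
  interval_cases b <;> interval_cases d <;> first
    | rfl
    | omega

lemma Bt_zero_col {b : ℕ} (hb : b < 6) : Bt b 0 = 1 := by
  interval_cases b <;> rfl

lemma Btaux1 : ∀ b, b < 6 → 1 ≤ b → ∀ d, d < 6 → 1 ≤ d →
    (if (b + 7 - d) % 3 = 0 then (0 : ZMod 2) else 1) * Bt (b - 1) (d - 1) +
      (if (d + 5) % 3 = 0 then (0 : ZMod 2) else 1) * Bt (b - 1) d = Bt b d := by decide

lemma Btaux2 : ∀ d, d < 6 → 1 ≤ d →
    (if (7 - d) % 3 = 0 then (0 : ZMod 2) else 1) * Bt 5 (d - 1) +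
      (if (d + 5) % 3 = 0 then (0 : ZMod 2) else 1) * Bt 5 d = 0 := by decide

/-- The key fractal characterization of fibonomials mod 2. -/
lemma fibnom_cast (n k : ℕ) :
    (fibnom n k : ZMod 2) = ((n/6).choose (k/6) : ℕ) * Bt (n % 6) (k % 6) := by
  induction n using Nat.strong_induction_on generalizing k with
  | _ n ih =>
  match n, k with
  | n, 0 =>
    simp [fibnom, Nat.zero_div, Nat.zero_mod, Bt_zero_col (Nat.mod_lt n (by norm_num))]
  | 0, k+1 =>
    rw [fibnom_eq_zero (by omega)]
    simp only [Nat.zero_div, Nat.zero_mod, Nat.cast_zero]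
    rcases Nat.eq_zero_or_pos ((k+1)/6) with h | h
    · rw [h, Bt_zero (by norm_num) (Nat.mod_lt _ (by norm_num)) (by omega)]
      simp
    · rw [Nat.choose_eq_zero_of_lt (by omega)]
      simp
  | n+1, k+1 =>
    by_cases hkn : k + 1 ≤ n + 1
    case neg =>
      rw [fibnom_eq_zero (by omega)]
      rcases Nat.lt_or_ge ((n+1)/6) ((k+1)/6) with h | h
      · rw [Nat.choose_eq_zero_of_lt h]; simp
      · have hq : (n+1)/6 = (k+1)/6 := by omega
        have hr : (n+1) % 6 < (k+1) % 6 := by omega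
        rw [Bt_zero (Nat.mod_lt _ (by norm_num)) (Nat.mod_lt _ (by norm_num)) hr]
        simp
    case pos =>
      -- decompositions
      obtain ⟨a, b, hb, hn⟩ : ∃ a b, b < 6 ∧ n + 1 = 6*a + b :=
        ⟨(n+1)/6, (n+1)%6, Nat.mod_lt _ (by norm_num), by omega⟩
      obtain ⟨c, d, hd, hk⟩ : ∃ c d, d < 6 ∧ k + 1 = 6*c + d :=
        ⟨(k+1)/6, (k+1)%6, Nat.mod_lt _ (by norm_num), by omega⟩
      have han : (n+1)/6 = a := by omega
      have hbn : (n+1)%6 = b := by omega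
      have hck : (k+1)/6 = c := by omega
      have hdk : (k+1)%6 = d := by omega
      rw [fibnom]
      push_cast
      rw [ih n (by omega) k, ih n (by omega) (k+1), fib_cast_two, fib_cast_two,
          han, hbn, hck, hdk]
      by_cases hb0 : b = 0
      · subst hb0
        have ha1 : 1 ≤ a := by omega
        have e1 : n / 6 = a - 1 := by omega
        have e2 : n % 6 = 5 := by omega
        by_cases hd0 : d = 0
        · subst hd0
          have hc1 : 1 ≤ c := by omega
          have e3 : k / 6 = c - 1 := by omega
          have e4 : k % 6 = 5 := by omega
          have e5 : (n - k + 1) % 3 = 1 := by omega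
          have e6 : k % 3 = 2 := by omega
          rw [e1, e2, e3, e4, e5, e6]
          obtain ⟨a', rfl⟩ : ∃ a', a = a' + 1 := ⟨a - 1, by omega⟩
          obtain ⟨c', rfl⟩ : ∃ c', c = c' + 1 := ⟨c - 1, by omega⟩
          simp only [Nat.add_sub_cancel]
          rw [Nat.choose_succ_succ]
          simp only [show Bt 5 5 = 1 from rfl, show Bt 5 0 = 1 from rfl,
            show Bt 0 0 = 1 from rfl]
          push_cast
          ring
        · have e3 : k / 6 = c := by omega
          have e4 : k % 6 = d - 1 := by omega
          have e5 : (n - k + 1) % 3 = (7 - d) % 3 := by omega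
          have e6 : k % 3 = (d + 5) % 3 := by omega
          rw [e1, e2, e3, e4, e5, e6, show Bt 0 d = 0 from Bt_zero (by norm_num) hd (by omega), mul_zero]
          linear_combination (((a - 1).choose c : ℕ) : ZMod 2) * Btaux2 d hd (by omega)
      · have e1 : n / 6 = a := by omega
        have e2 : n % 6 = b - 1 := by omega
        by_cases hd0 : d = 0
        · subst hd0
          have hc1 : 1 ≤ c := by omega
          have e3 : k / 6 = c - 1 := by omega
          have e4 : k % 6 = 5 := by omega
          have e6 : k % 3 = 2 := by omega
          rw [e1, e2, e3, e4, e6, show Bt (b-1) 5 = 0 from Bt_zero (by omega) (by norm_num) (by omega),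
            Bt_zero_col (show b - 1 < 6 from by omega), Bt_zero_col hb]
          simp
        · have e3 : k / 6 = c := by omega
          have e4 : k % 6 = d - 1 := by omega
          have e5 : (n - k + 1) % 3 = (b + 7 - d) % 3 := by omega
          have e6 : k % 3 = (d + 5) % 3 := by omega
          rw [e1, e2, e3, e4, e5, e6]
          linear_combination ((a.choose c : ℕ) : ZMod 2) * Btaux1 b hb (by omega) d hd (by omega)

lemma choose_add_pow (t a c : ℕ) (ha : a < 2 ^ t) (hc : c < 2 ^ t) :
    (((a + 2 ^ t).choose c : ℕ) : ZMod 2) = ((a.choose c : ℕ) : ZMod 2) := by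
  rw [Nat.add_choose_eq, Nat.cast_sum, Finset.sum_eq_single (c, 0)]
  · simp
  · intro ij hij hne
    have h1 : ij.1 + ij.2 = c := Finset.HasAntidiagonal.mem_antidiagonal.mp hij
    have h2 : ij.2 ≠ 0 := by
      intro h
      exact hne (Prod.ext (by omega) h)
    have h3 : (2 : ℕ) ∣ (2 ^ t).choose ij.2 :=
      Nat.Prime.dvd_choose_pow Nat.prime_two h2 (by omega)
    push_cast
    rw [(ZMod.natCast_eq_zero_iff _ _).mpr h3, mul_zero]
  · intro h
    exact absurd (Finset.HasAntidiagonal.mem_antidiagonal.mpr (by omega)) h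

theorem fibnomial_periodicity_mod_two (m n k : ℕ) (hn : n < 3 * 2 ^ m)
    (hk : k < 3 * 2 ^ m) :
    fibnomial (n + 3 * 2 ^ m) k ≡ fibnomial n k [MOD 2] := by
  rcases m with _ | t
  · norm_num at hn hk
    interval_cases n <;> interval_cases k <;> decide
  · have hP : 3 * 2 ^ (t + 1) = 6 * 2 ^ t := by ring
    rw [hP] at hn hk ⊢
    rw [← ZMod.natCast_eq_natCast_iff, fibnomial_eq_fibnom, fibnomial_eq_fibnom,
      fibnom_cast, fibnom_cast]
    have hq1 : 1 ≤ 2 ^ t := Nat.one_le_two_pow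
    have e1 : (n + 6 * 2 ^ t) % 6 = n % 6 := by omega
    have e2 : (n + 6 * 2 ^ t) / 6 = n / 6 + 2 ^ t := by omega
    rw [e1, e2, choose_add_pow t (n / 6) (k / 6) (by omega) (by omega)]
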